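/- arXiv:2409.19997 — 3 statements merged into one kernel-verified Lean document; each statement's English description precedes it below -/
import Mathlib

section
/- Let f : [0,L] → ℝ₊ be continuous with f(s) ~ s as s → 0⁺ and f(L−s) ~ s as s → 0⁺, and f > 0 on (0,L). Define Iₙ(r) = ∫₀ʳ f(s)^{n−1} ds for n ≥ 2. Then the function t ↦ (f(t)^{n−1}/Iₙ(t)²)·∫₀ᵗ (Iₙ(s)²/f(s)^{n−1}) ds is integrable on (0,L). -/
open MeasureTheory Filter Set Asymptotics Topology intervalIntegral

noncomputable section

/-- `f` is a weight function on `[0,L]`: continuous, positive on `(0,L)`,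
with `f s ~ s` as `s → 0⁺` and `f (L - s) ~ s` as `s → 0⁺`. -/
def IsWeightFn (L : ℝ) (f : ℝ → ℝ) : Prop :=
  ContinuousOn f (Set.Icc 0 L) ∧ (∀ s ∈ Set.Ioo 0 L, 0 < f s) ∧
    Asymptotics.IsEquivalent (𝓝[>] (0:ℝ)) f id ∧
    Asymptotics.IsEquivalent (𝓝[>] (0:ℝ)) (fun s => f (L - s)) id

/-!
Put `F = f ^ (n - 1)`, `I t = ∫₀ᵗ F` and let `g` be the kernel. Near `0`, `F` behaves like a power
of `t`: `F u ≤ c F v` whenever `u ≤ 2 v`. This gives `I s ≤ c s F s` and `t F t ≤ 2 c I t`, hence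
`∫₀ᵗ I² / F ≤ c t² I t` and `g t ≤ 2 c² t`. Near `L`, `F` is almost decreasing, so
`I² / F ≤ c I(L)² / F t` on `[L - δ, t]`; thus `F t ∫₀ᵗ I² / F` stays bounded while
`I t ≥ I (L - δ) > 0`. In between, `g` is continuous on a compact interval. So `g` is bounded and
continuous on `(0, L)`, hence integrable.
-/

lemma integrableOn_of_continuousOn_of_norm_le {φ : ℝ → ℝ} {s : Set ℝ} {C : ℝ}
    (hs : MeasurableSet s) (hs' : volume s < ⊤) (hφ : ContinuousOn φ s)
    (hC : ∀ x ∈ s, ‖φ x‖ ≤ C) : IntegrableOn φ s :=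
  .of_bound hs' (hφ.aestronglyMeasurable hs) C ((ae_restrict_iff' hs).2 (.of_forall hC))

lemma continuousAt_primitive_of_continuousOn {φ : ℝ → ℝ} {a b t : ℝ}
    (hint : IntervalIntegrable φ volume a t) (hφ : ContinuousOn φ (Ioo a b)) (ht : t ∈ Ioo a b) :
    ContinuousAt (fun u => ∫ s in a..u, φ s) t :=
  (integral_hasDerivAt_right hint (hφ.stronglyMeasurableAtFilter isOpen_Ioo t ht)
    (hφ.continuousAt (Ioo_mem_nhds ht.1 ht.2))).continuousAt

def RegularNearZero (G : ℝ → ℝ) (c δ : ℝ) : Prop :=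
  ∀ u ∈ Ioc 0 δ, ∀ v ∈ Ioc 0 δ, u ≤ 2 * v → G u ≤ c * G v

lemma RegularNearZero.nonneg {G : ℝ → ℝ} {c δ : ℝ} (h : RegularNearZero G c δ) (hδ : 0 < δ)
    (hG : 0 < G δ) : 0 ≤ c := by
  have := h δ ⟨hδ, le_rfl⟩ δ ⟨hδ, le_rfl⟩ (by linarith)
  nlinarith

lemma Asymptotics.IsEquivalent.eventually_regularNearZero_pow {g : ℝ → ℝ}
    (h : IsEquivalent (𝓝[>] 0) g id) (k : ℕ) :
    ∀ᶠ δ in 𝓝[>] 0, RegularNearZero (fun s => g s ^ k) (8 ^ k) δ := by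
  have hbounds : ∀ᶠ s in 𝓝[>] (0 : ℝ), s / 2 ≤ g s ∧ g s ≤ 2 * s := by
    filter_upwards [h.isLittleO.def (by norm_num : (0 : ℝ) < 1 / 2), self_mem_nhdsWithin]
      with s hs (hs0 : 0 < s)
    rw [Pi.sub_apply, id, Real.norm_eq_abs, Real.norm_eq_abs, abs_of_pos hs0] at hs
    constructor <;> linarith [abs_le.1 hs]
  obtain ⟨ε, hε, hεbounds⟩ := (nhdsGT_basis 0).eventually_iff.1 hbounds
  filter_upwards [Ioo_mem_nhdsGT hε] with δ hδ u hu v hv huv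
  have hgu := hεbounds ⟨hu.1, hu.2.trans_lt hδ.2⟩
  have hgv := hεbounds ⟨hv.1, hv.2.trans_lt hδ.2⟩
  -- `g u ≤ 2 u ≤ 4 v ≤ 8 g v`
  calc g u ^ k ≤ (8 * g v) ^ k := pow_le_pow_left₀ (by linarith [hu.1]) (by linarith) k
    _ = 8 ^ k * g v ^ k := mul_pow _ _ _

def primitive (F : ℝ → ℝ) (t : ℝ) : ℝ := ∫ s in (0 : ℝ)..t, F s

def greenKernel (F : ℝ → ℝ) (t : ℝ) : ℝ :=
  F t / primitive F t ^ 2 * ∫ s in (0 : ℝ)..t, primitive F s ^ 2 / F s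

section

variable {F : ℝ → ℝ} {L c δ : ℝ}

lemma intervalIntegrable_of_continuousOn_Icc (hFc : ContinuousOn F (Icc 0 L)) {a b : ℝ}
    (ha : a ∈ Icc 0 L) (hb : b ∈ Icc 0 L) : IntervalIntegrable F volume a b :=
  (hFc.mono (uIcc_subset_Icc ha hb)).intervalIntegrable

lemma continuousOn_primitive (hFc : ContinuousOn F (Icc 0 L)) :
    ContinuousOn (primitive F) (Ioo 0 L) := fun _ ht =>
  (continuousAt_primitive_of_continuousOn
    (intervalIntegrable_of_continuousOn_Icc hFc ⟨le_rfl, ht.1.le.trans ht.2.le⟩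
      ⟨ht.1.le, ht.2.le⟩) (hFc.mono Ioo_subset_Icc_self) ht).continuousWithinAt

variable (hFpos : ∀ s ∈ Ioo 0 L, 0 < F s)
include hFpos

lemma quotient_nonneg {s : ℝ} (hs : s ∈ Ioo 0 L) : 0 ≤ primitive F s ^ 2 / F s :=
  div_nonneg (sq_nonneg _) (hFpos s hs).le

lemma integral_quotient_nonneg {t : ℝ} (ht : t ∈ Ico 0 L) :
    0 ≤ ∫ s in (0 : ℝ)..t, primitive F s ^ 2 / F s := by
  refine integral_nonneg ht.1 fun s hs => ?_
  rcases hs.1.eq_or_lt with rfl | hs0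
  · simp [primitive]
  · exact quotient_nonneg hFpos ⟨hs0, hs.2.trans_lt ht.2⟩

lemma greenKernel_nonneg {t : ℝ} (ht : t ∈ Ioo 0 L) : 0 ≤ greenKernel F t :=
  mul_nonneg (div_nonneg (hFpos t ht).le (sq_nonneg _))
    (integral_quotient_nonneg hFpos ⟨ht.1.le, ht.2⟩)

variable (hFc : ContinuousOn F (Icc 0 L))
include hFc

lemma strictMonoOn_primitive : StrictMonoOn (primitive F) (Icc 0 L) := by
  intro a ha b hb hab
  have h0 : (0 : ℝ) ∈ Icc 0 L := ⟨le_rfl, ha.1.trans ha.2⟩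
  rw [← sub_pos, primitive, primitive, integral_interval_sub_left
    (intervalIntegrable_of_continuousOn_Icc hFc h0 hb)
    (intervalIntegrable_of_continuousOn_Icc hFc h0 ha)]
  exact intervalIntegral_pos_of_pos_on (intervalIntegrable_of_continuousOn_Icc hFc ha hb)
    (fun x hx => hFpos x ⟨ha.1.trans_lt hx.1, hx.2.trans_le hb.2⟩) hab

lemma primitive_pos {t : ℝ} (ht : t ∈ Ioc 0 L) : 0 < primitive F t := by
  simpa [primitive] using strictMonoOn_primitive hFpos hFc ⟨le_rfl, ht.1.le.trans ht.2⟩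
    ⟨ht.1.le, ht.2⟩ ht.1

lemma primitive_nonneg {t : ℝ} (ht : t ∈ Icc 0 L) : 0 ≤ primitive F t := by
  rcases ht.1.eq_or_lt with rfl | ht0
  · simp [primitive]
  · exact (primitive_pos hFpos hFc ⟨ht0, ht.2⟩).le

lemma continuousOn_quotient : ContinuousOn (fun s => primitive F s ^ 2 / F s) (Ioo 0 L) :=
  ((continuousOn_primitive hFc).pow 2).div (hFc.mono Ioo_subset_Icc_self)
    fun s hs => (hFpos s hs).ne'

section NearZero

variable (h0 : RegularNearZero F c δ) (hδL : δ < L)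
include h0 hδL

omit hFpos in
lemma primitive_le_of_regularNearZero {s : ℝ} (hs : s ∈ Ioc 0 δ) :
    primitive F s ≤ c * s * F s := by
  calc primitive F s ≤ ∫ _ in (0 : ℝ)..s, c * F s :=
        integral_mono_on_of_le_Ioo hs.1.le
          (intervalIntegrable_of_continuousOn_Icc hFc ⟨le_rfl, hs.1.le.trans (hs.2.trans hδL.le)⟩
            ⟨hs.1.le, hs.2.trans hδL.le⟩) intervalIntegrable_const
          fun u hu => h0 u ⟨hu.1, hu.2.le.trans hs.2⟩ s hs (by linarith [hu.2, hs.1])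
    _ = c * s * F s := by simp only [intervalIntegral.integral_const, smul_eq_mul]; ring

lemma mul_le_primitive_of_regularNearZero {t : ℝ} (ht : t ∈ Ioc 0 δ) :
    t * F t ≤ 2 * c * primitive F t := by
  have htL : t ∈ Icc 0 L := ⟨ht.1.le, ht.2.trans hδL.le⟩
  have hhalf : t / 2 ∈ Icc 0 L := ⟨by linarith [ht.1], by linarith [htL.2, ht.1]⟩
  have hc : 0 ≤ c := h0.nonneg (ht.1.trans_le ht.2) (hFpos δ ⟨ht.1.trans_le ht.2, hδL⟩)
  have hsplit : primitive F t = primitive F (t / 2) + ∫ u in (t / 2)..t, F u :=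
    (integral_add_adjacent_intervals
      (intervalIntegrable_of_continuousOn_Icc hFc ⟨le_rfl, htL.1.trans htL.2⟩ hhalf)
      (intervalIntegrable_of_continuousOn_Icc hFc hhalf htL)).symm
  calc t * F t = 2 * ∫ _ in (t / 2)..t, F t := by
        simp only [intervalIntegral.integral_const, smul_eq_mul]; ring
    _ ≤ 2 * ∫ u in (t / 2)..t, c * F u := by
        gcongr
        refine integral_mono_on_of_le_Ioo (by linarith [ht.1]) intervalIntegrable_const
          ((intervalIntegrable_of_continuousOn_Icc hFc hhalf htL).const_mul c) fun u hu => ?_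
        exact h0 t ht u ⟨by linarith [ht.1, hu.1], hu.2.le.trans ht.2⟩ (by linarith [hu.1])
    _ = 2 * c * ∫ u in (t / 2)..t, F u := by rw [intervalIntegral.integral_const_mul]; ring
    _ ≤ 2 * c * primitive F t := by
        gcongr
        linarith [primitive_nonneg hFpos hFc hhalf]

lemma quotient_le_of_regularNearZero {s t : ℝ} (hs : 0 < s) (hst : s ≤ t) (ht : t ≤ δ) :
    primitive F s ^ 2 / F s ≤ c * t * primitive F t := by
  have hsL : s ∈ Ioo 0 L := ⟨hs, by linarith⟩
  have hδ : 0 < δ := hs.trans_le (hst.trans ht)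
  have hc : 0 ≤ c := h0.nonneg hδ (hFpos δ ⟨hδ, hδL⟩)
  have hIs := primitive_le_of_regularNearZero hFc h0 hδL ⟨hs, hst.trans ht⟩
  have hIs0 := primitive_nonneg hFpos hFc ⟨hs.le, hsL.2.le⟩
  have hmono : primitive F s ≤ primitive F t := (strictMonoOn_primitive hFpos hFc).monotoneOn
    ⟨hs.le, hsL.2.le⟩ ⟨hs.le.trans hst, by linarith⟩ hst
  rw [div_le_iff₀ (hFpos s hsL)]
  calc primitive F s ^ 2 ≤ primitive F s * (c * s * F s) := by
        rw [sq]; exact mul_le_mul_of_nonneg_left hIs hIs0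
    _ = c * s * primitive F s * F s := by ring
    _ ≤ c * t * primitive F t * F s := by
        have hmul : c * s * primitive F s ≤ c * t * primitive F t :=
          mul_le_mul (by gcongr) hmono hIs0 (mul_nonneg hc (hs.le.trans hst))
        exact mul_le_mul_of_nonneg_right hmul (hFpos s hsL).le

lemma intervalIntegrable_quotient (hδ : 0 < δ) {t : ℝ} (ht : t ∈ Ico 0 L) :
    IntervalIntegrable (fun s => primitive F s ^ 2 / F s) volume 0 t := by
  rw [intervalIntegrable_iff_integrableOn_Ioc_of_le ht.1]
  have hcont := continuousOn_quotient hFpos hFc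
  obtain ⟨C, hC⟩ := (isCompact_Icc : IsCompact (Icc δ t)).exists_bound_of_continuousOn
    (hcont.mono fun s hs => ⟨hδ.trans_le hs.1, hs.2.trans_lt ht.2⟩)
  refine integrableOn_of_continuousOn_of_norm_le (C := max (c * δ * primitive F δ) C)
    measurableSet_Ioc measure_Ioc_lt_top
    (hcont.mono fun s hs => ⟨hs.1, hs.2.trans_lt ht.2⟩) fun s hs => ?_
  rcases le_or_gt s δ with hsδ | hδs
  · rw [Real.norm_of_nonneg (quotient_nonneg hFpos ⟨hs.1, by linarith⟩)]
    exact (quotient_le_of_regularNearZero hFpos hFc h0 hδL hs.1 hsδ le_rfl).trans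
      (le_max_left _ _)
  · exact (hC s ⟨hδs.le, hs.2⟩).trans (le_max_right _ _)

lemma integral_quotient_le_of_regularNearZero {t : ℝ} (ht : t ∈ Ioc 0 δ) :
    ∫ s in (0 : ℝ)..t, primitive F s ^ 2 / F s ≤ c * t ^ 2 * primitive F t := by
  calc ∫ s in (0 : ℝ)..t, primitive F s ^ 2 / F s ≤ ∫ _ in (0 : ℝ)..t, c * t * primitive F t :=
        integral_mono_on_of_le_Ioo ht.1.le
          (intervalIntegrable_quotient hFpos hFc h0 hδL (ht.1.trans_le ht.2)
            ⟨ht.1.le, ht.2.trans_lt hδL⟩) intervalIntegrable_const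
          fun s hs => quotient_le_of_regularNearZero hFpos hFc h0 hδL hs.1 hs.2.le ht.2
    _ = c * t ^ 2 * primitive F t := by
        simp only [intervalIntegral.integral_const, smul_eq_mul]; ring

lemma greenKernel_le_of_regularNearZero {t : ℝ} (ht : t ∈ Ioc 0 δ) :
    greenKernel F t ≤ 2 * c ^ 2 * t := by
  have htL : t ∈ Ioo 0 L := ⟨ht.1, ht.2.trans_lt hδL⟩
  have hI := primitive_pos hFpos hFc ⟨ht.1, htL.2.le⟩
  have hc : 0 ≤ c := h0.nonneg (ht.1.trans_le ht.2) (hFpos δ ⟨ht.1.trans_le ht.2, hδL⟩)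
  have hF := (hFpos t htL).le
  calc greenKernel F t ≤ F t / primitive F t ^ 2 * (c * t ^ 2 * primitive F t) := by
        unfold greenKernel
        gcongr
        exact integral_quotient_le_of_regularNearZero hFpos hFc h0 hδL ht
    _ = c * t * (t * F t) / primitive F t := by field_simp
    _ ≤ c * t * (2 * c * primitive F t) / primitive F t := by
        gcongr c * t * ?_ / _
        · exact mul_nonneg hc ht.1.le
        · exact mul_le_primitive_of_regularNearZero hFpos hFc h0 hδL ht
    _ = 2 * c ^ 2 * t := by field_simp

lemma continuousOn_greenKernel (hδ : 0 < δ) : ContinuousOn (greenKernel F) (Ioo 0 L) := by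
  have hJ : ContinuousOn (fun t => ∫ s in (0 : ℝ)..t, primitive F s ^ 2 / F s) (Ioo 0 L) :=
    fun t ht => (continuousAt_primitive_of_continuousOn
      (intervalIntegrable_quotient hFpos hFc h0 hδL hδ ⟨ht.1.le, ht.2⟩)
      (continuousOn_quotient hFpos hFc) ht).continuousWithinAt
  exact ((hFc.mono Ioo_subset_Icc_self).div ((continuousOn_primitive hFc).pow 2)
    fun t ht => pow_ne_zero 2 (primitive_pos hFpos hFc ⟨ht.1, ht.2.le⟩).ne').mul hJ

section NearRight

variable (h1 : RegularNearZero (fun u => F (L - u)) c δ)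
include h1

omit hFpos hFc h0 hδL in
lemma le_mul_of_regularNearZero_reflect {s t : ℝ} (hs : L - δ ≤ s) (hst : s ≤ t) (ht : t < L) :
    F t ≤ c * F s := by
  simpa using h1 (L - t) ⟨by linarith, by linarith⟩ (L - s) ⟨by linarith, by linarith⟩
    (by linarith)

omit h0 in
lemma mul_integral_quotient_le_near_right {t : ℝ} (ht : t ∈ Ico (L - δ) L) :
    F t * ∫ s in (L - δ)..t, primitive F s ^ 2 / F s ≤ c * δ * primitive F L ^ 2 := by
  have hFt := hFpos t ⟨by linarith [ht.1], ht.2⟩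
  have hquot : ∀ s ∈ Ioo (L - δ) t, primitive F s ^ 2 / F s ≤ c * primitive F L ^ 2 / F t := by
    intro s hs
    have hsL : s ∈ Ioo 0 L := ⟨by linarith [hs.1], hs.2.trans ht.2⟩
    have hIs : primitive F s ^ 2 ≤ primitive F L ^ 2 := pow_le_pow_left₀
      (primitive_nonneg hFpos hFc ⟨hsL.1.le, hsL.2.le⟩)
      ((strictMonoOn_primitive hFpos hFc).monotoneOn ⟨hsL.1.le, hsL.2.le⟩
        ⟨hsL.1.le.trans hsL.2.le, le_rfl⟩ hsL.2.le) 2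
    rw [div_le_div_iff₀ (hFpos s hsL) hFt]
    calc primitive F s ^ 2 * F t ≤ primitive F L ^ 2 * (c * F s) :=
          mul_le_mul hIs (le_mul_of_regularNearZero_reflect h1 hs.1.le hs.2.le ht.2) hFt.le
            (sq_nonneg _)
      _ = c * primitive F L ^ 2 * F s := by ring
  have hint : IntervalIntegrable (fun s => primitive F s ^ 2 / F s) volume (L - δ) t :=
    ContinuousOn.intervalIntegrable_of_Icc ht.1 ((continuousOn_quotient hFpos hFc).mono
      fun s hs => ⟨by linarith [hs.1], hs.2.trans_lt ht.2⟩)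
  calc F t * ∫ s in (L - δ)..t, primitive F s ^ 2 / F s
      ≤ F t * ∫ _ in (L - δ)..t, c * primitive F L ^ 2 / F t := by
        gcongr
        exact integral_mono_on_of_le_Ioo ht.1 hint intervalIntegrable_const hquot
    _ = (t - (L - δ)) * (c * primitive F L ^ 2) := by
        simp only [intervalIntegral.integral_const, smul_eq_mul]; field_simp
    _ ≤ δ * (c * primitive F L ^ 2) := by
        have hc : 0 ≤ c := h1.nonneg (by linarith [ht.1, ht.2])
          (hFpos (L - δ) ⟨by linarith, by linarith [ht.1, ht.2]⟩)
        gcongr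
        linarith [ht.2]
    _ = c * δ * primitive F L ^ 2 := by ring

lemma exists_greenKernel_le_near_right (hδ : 0 < δ) :
    ∃ C, ∀ t ∈ Ico (L - δ) L, greenKernel F t ≤ C := by
  set a := L - δ
  set J := fun t => ∫ s in (0 : ℝ)..t, primitive F s ^ 2 / F s
  have ha : a ∈ Ioo 0 L := ⟨by linarith, by linarith⟩
  have hIa := primitive_pos hFpos hFc ⟨ha.1, ha.2.le⟩
  have hc : 0 ≤ c := h1.nonneg hδ (hFpos a ha)
  have hJa : 0 ≤ J a := integral_quotient_nonneg hFpos ⟨ha.1.le, ha.2⟩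
  refine ⟨(c * F a * J a + c * δ * primitive F L ^ 2) / primitive F a ^ 2, fun t ht => ?_⟩
  have htL : t ∈ Ioo 0 L := ⟨ha.1.trans_le ht.1, ht.2⟩
  have hsplit : J t = J a + ∫ s in a..t, primitive F s ^ 2 / F s :=
    (integral_add_adjacent_intervals
      (intervalIntegrable_quotient hFpos hFc h0 hδL hδ ⟨ha.1.le, ha.2⟩)
      ((intervalIntegrable_quotient hFpos hFc h0 hδL hδ ⟨ha.1.le, ha.2⟩).symm.trans
        (intervalIntegrable_quotient hFpos hFc h0 hδL hδ ⟨htL.1.le, htL.2⟩))).symm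
  have hIat : primitive F a ≤ primitive F t := (strictMonoOn_primitive hFpos hFc).monotoneOn
    ⟨ha.1.le, ha.2.le⟩ ⟨htL.1.le, htL.2.le⟩ ht.1
  calc greenKernel F t = F t / primitive F t ^ 2 * J t := rfl
    _ = (F t * J a + F t * ∫ s in a..t, primitive F s ^ 2 / F s) / primitive F t ^ 2 := by
        rw [hsplit]; ring
    _ ≤ (c * F a * J a + c * δ * primitive F L ^ 2) / primitive F t ^ 2 :=
        div_le_div_of_nonneg_right (add_le_add
          (mul_le_mul_of_nonneg_right (le_mul_of_regularNearZero_reflect h1 le_rfl ht.1 ht.2) hJa)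
          (mul_integral_quotient_le_near_right hFpos hFc hδL h1 ht)) (sq_nonneg _)
    _ ≤ (c * F a * J a + c * δ * primitive F L ^ 2) / primitive F a ^ 2 := by
        gcongr
        have := (hFpos a ha).le
        positivity

end NearRight

end NearZero

theorem integrableOn_greenKernel (hδ : 0 < δ) (hδL : δ < L) (h0 : RegularNearZero F c δ)
    (h1 : RegularNearZero (fun u => F (L - u)) c δ) :
    IntegrableOn (greenKernel F) (Ioo 0 L) := by
  have hcont := continuousOn_greenKernel hFpos hFc h0 hδL hδ
  obtain ⟨C₁, hC₁⟩ := exists_greenKernel_le_near_right hFpos hFc h0 hδL h1 hδ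
  obtain ⟨C₂, hC₂⟩ := (isCompact_Icc : IsCompact (Icc δ (L - δ))).exists_bound_of_continuousOn
    (hcont.mono fun t ht => ⟨hδ.trans_le ht.1, by linarith [ht.2]⟩)
  refine integrableOn_of_continuousOn_of_norm_le (C := max (2 * c ^ 2 * δ) (max C₁ C₂))
    measurableSet_Ioo measure_Ioo_lt_top hcont fun t ht => ?_
  rw [Real.norm_of_nonneg (greenKernel_nonneg hFpos ht)]
  rcases le_or_gt t δ with htδ | hδt
  · calc greenKernel F t ≤ 2 * c ^ 2 * t :=
          greenKernel_le_of_regularNearZero hFpos hFc h0 hδL ⟨ht.1, htδ⟩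
      _ ≤ 2 * c ^ 2 * δ := by gcongr
      _ ≤ _ := le_max_left _ _
  rcases le_or_gt (L - δ) t with htR | htR
  · exact (hC₁ t ⟨htR, ht.2⟩).trans ((le_max_left _ _).trans (le_max_right _ _))
  · exact (le_abs_self _).trans ((hC₂ t ⟨hδt.le, htR.le⟩).trans
      ((le_max_right _ _).trans (le_max_right _ _)))

end

theorem integrable_green_kernel_general
    (L : ℝ) (hL : 0 < L) (f : ℝ → ℝ) (hf : IsWeightFn L f)
    (n : ℕ) (I : ℝ → ℝ)
    (hI : ∀ r, I r = ∫ s in (0:ℝ)..r, f s ^ (n - 1)) :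
    IntegrableOn
      (fun t => f t ^ (n - 1) / (I t) ^ 2 * ∫ s in (0:ℝ)..t, (I s) ^ 2 / f s ^ (n - 1))
      (Set.Ioo 0 L) := by
  obtain ⟨hfc, hfpos, hf0, hfL⟩ := hf
  obtain rfl : I = primitive (fun s => f s ^ (n - 1)) := funext hI
  have hsmall : ∀ᶠ δ in 𝓝[>] (0 : ℝ), δ ∈ Ioo 0 L := Ioo_mem_nhdsGT hL
  obtain ⟨δ, ⟨hδ, hδL⟩, hδ0, hδ1⟩ := (hsmall.and ((hf0.eventually_regularNearZero_pow (n - 1)).and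
    (hfL.eventually_regularNearZero_pow (n - 1)))).exists
  exact integrableOn_greenKernel (fun s hs => pow_pos (hfpos s hs) _) (hfc.pow _) hδ hδL hδ0 hδ1

theorem integrable_green_kernel
    (L : ℝ) (hL : 0 < L) (f : ℝ → ℝ) (hf : IsWeightFn L f)
    (n : ℕ) (hn : 2 ≤ n) (I : ℝ → ℝ)
    (hI : ∀ r, I r = ∫ s in (0:ℝ)..r, f s ^ (n - 1)) :
    IntegrableOn
      (fun t => f t ^ (n - 1) / (I t) ^ 2 * ∫ s in (0:ℝ)..t, (I s) ^ 2 / f s ^ (n - 1))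
      (Set.Ioo 0 L) :=
  integrable_green_kernel_general L hL f hf n I hI
end
end

section
/- Under the same hypotheses (f C³, symmetric about L/2, f' > 0 on [0,L/2), f'' ≤ 0, f''(L/2) < 0), the function s ↦ f(s)/f'(s) − f(L/2)/(|f''(L/2)|(L/2 − s)) is bounded on [0, L/2), and consequently (1/n)∫₀^{L/2 − A/√n} f(s)/f'(s) ds = (f(L/2)/|f''(L/2)|)(ln n/(2n) − ln A/n) + O(1/n) uniformly for fixed A. -/
open MeasureTheory Filter Set Asymptotics Topology intervalIntegral Real

noncomputable section

/-!
Put `c = L / 2` and `D = |f''(c)|`; symmetry gives `f'(c) = 0`. The numerator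
`N s = D (c - s) f s - f c f' s` of `f s / f' s - f c / (D (c - s))` vanishes together with its
derivative at `c`, so `|N s| ≤ C (c - s)²`, while the denominator `D (c - s) f' s` is at least
`m D (c - s)²` because `f' s / (c - s)` extends to a positive continuous function on `[0, c]`.
So the difference is bounded, and integrating it up to `c - A / √n`, with
`∫₀^{c - ε} ds / (c - s) = log (c / ε)`, gives the expansion.
-/

theorem deriv_half_eq_zero_of_symmetric {f : ℝ → ℝ} {L : ℝ} (hsym : ∀ s, f (L - s) = f s) :
    deriv f (L / 2) = 0 := by
  have h : deriv f (L / 2) = -deriv f (L - L / 2) := by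
    simpa only [hsym] using deriv_comp_const_sub (f := f) (a := L) (x := L / 2)
  rw [show L - L / 2 = L / 2 by ring] at h
  linarith

theorem abs_le_mul_sub_of_abs_deriv_le {g : ℝ → ℝ} {s c B : ℝ} (hg : Differentiable ℝ g)
    (hgc : g c = 0) (hsc : s ≤ c) (hB : ∀ t ∈ Icc s c, |deriv g t| ≤ B) :
    |g s| ≤ B * (c - s) := by
  have h := (convex_Icc s c).norm_image_sub_le_of_norm_deriv_le (fun t _ => hg t) hB
    (left_mem_Icc.2 hsc) (right_mem_Icc.2 hsc)
  rwa [hgc, zero_sub, norm_neg, Real.norm_eq_abs, Real.norm_eq_abs,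
    abs_of_nonneg (sub_nonneg.2 hsc)] at h

theorem exists_abs_le_mul_sq_of_contDiff {g : ℝ → ℝ} {a c : ℝ} (hg : ContDiff ℝ 2 g)
    (hgc : g c = 0) (hg'c : deriv g c = 0) :
    ∃ C, 0 ≤ C ∧ ∀ s ∈ Icc a c, |g s| ≤ C * (c - s) ^ 2 := by
  obtain ⟨C, hC⟩ := isCompact_Icc.exists_bound_of_continuousOn (s := Icc a c)
    ((hg.deriv' (n := 1)).continuous_deriv le_rfl).continuousOn
  refine ⟨max C 0, le_max_right _ _, fun s hs => ?_⟩
  have hg' : ∀ t ∈ Icc a c, |deriv g t| ≤ max C 0 * (c - t) := fun t ht =>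
    abs_le_mul_sub_of_abs_deriv_le hg.differentiable_deriv_two hg'c ht.2
      fun u hu => (hC u ⟨ht.1.trans hu.1, hu.2⟩).trans (le_max_left _ _)
  calc |g s| ≤ max C 0 * (c - s) * (c - s) :=
        abs_le_mul_sub_of_abs_deriv_le (hg.differentiable two_ne_zero) hgc hs.2 fun t ht =>
          (hg' t ⟨hs.1.trans ht.1, ht.2⟩).trans
            (mul_le_mul_of_nonneg_left (by linarith [ht.1]) (le_max_right _ _))
    _ = max C 0 * (c - s) ^ 2 := by ring

theorem exists_pos_mul_sub_le {g : ℝ → ℝ} {a c : ℝ} (hg : Continuous g)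
    (hgd : DifferentiableAt ℝ g c) (hgc : g c = 0) (hpos : ∀ s ∈ Ico a c, 0 < g s)
    (hd : deriv g c < 0) :
    ∃ m, 0 < m ∧ ∀ s ∈ Icc a c, m * (c - s) ≤ g s := by
  have hslope : ∀ s, g s = (c - s) * -dslope g c s := fun s => by
    have h := sub_smul_dslope g c s
    rw [hgc, sub_zero, smul_eq_mul] at h
    linarith
  have hcont : Continuous fun s => -dslope g c s :=
    (continuousOn_univ.1 ((continuousOn_dslope univ_mem).2 ⟨hg.continuousOn, hgd⟩)).neg
  obtain ⟨m, hm, hmg⟩ := isCompact_Icc.exists_forall_le' (s := Icc a c) hcont.continuousOn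
    (a := 0) fun s hs => by
      rcases hs.2.lt_or_eq with hsc | rfl
      · have := hpos s ⟨hs.1, hsc⟩
        rw [hslope s] at this
        exact pos_of_mul_pos_right this (sub_pos.2 hsc).le
      · simpa [dslope_same] using hd
  refine ⟨m, hm, fun s hs => ?_⟩
  rw [hslope s, mul_comm]
  exact mul_le_mul_of_nonneg_left (hmg s hs) (sub_nonneg.2 hs.2)

theorem exists_bound_div_deriv_sub_div {f : ℝ → ℝ} {a c : ℝ} (hf : ContDiff ℝ 3 f)
    (hf' : ∀ s ∈ Ico a c, 0 < deriv f s) (hf'c : deriv f c = 0)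
    (hf''c : deriv (deriv f) c < 0) :
    ∃ M, ∀ s ∈ Ico a c, |f s / deriv f s - f c / (|deriv (deriv f) c| * (c - s))| ≤ M := by
  set D := |deriv (deriv f) c|
  have hD : 0 < D := abs_pos.2 hf''c.ne
  have hf₂ : ContDiff ℝ 2 (deriv f) := hf.deriv'
  set N : ℝ → ℝ := fun t => D * (c - t) * f t - f c * deriv f t
  have hN : ContDiff ℝ 2 N := by
    have : ContDiff ℝ 2 f := hf.of_le (by norm_num)
    simp only [N]
    fun_prop
  have hN'c : deriv N c = 0 := by
    have h : HasDerivAt N _ c := ((((hasDerivAt_id c).const_sub c).const_mul D).mul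
      ((hf.differentiable (by norm_num)) c).hasDerivAt).sub
      ((hf₂.differentiable two_ne_zero c).hasDerivAt.const_mul (f c))
    rw [h.deriv, hf'c, show D = -deriv (deriv f) c from abs_of_neg hf''c]
    ring
  obtain ⟨C, hC0, hC⟩ := exists_abs_le_mul_sq_of_contDiff (a := a) hN (by simp [N, hf'c]) hN'c
  obtain ⟨m, hm, hmf'⟩ := exists_pos_mul_sub_le (a := a) hf₂.continuous
    (hf₂.differentiable two_ne_zero c) hf'c hf' hf''c
  refine ⟨C / (D * m), fun s hs => ?_⟩
  have hcs : 0 < c - s := sub_pos.2 hs.2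
  have hfs := hf' s hs
  have hNs := hC s ⟨hs.1, hs.2.le⟩
  rw [div_sub_div _ _ hfs.ne' (by positivity), abs_div,
    abs_of_pos (show 0 < deriv f s * (D * (c - s)) by positivity),
    div_le_iff₀ (by positivity)]
  calc |f s * (D * (c - s)) - deriv f s * f c| = |N s| := by
        simp only [N]
        ring_nf
    _ ≤ C / (D * m) * (m * (c - s) * (D * (c - s))) := by
        rw [show C / (D * m) * (m * (c - s) * (D * (c - s))) = C * (c - s) ^ 2 by
          field_simp]
        exact hNs
    _ ≤ C / (D * m) * (deriv f s * (D * (c - s))) := by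
        gcongr
        exact hmf' s ⟨hs.1, hs.2.le⟩

theorem integral_inv_const_sub {a b c : ℝ} (hac : a < c) (hbc : b < c) :
    ∫ s in a..b, (c - s)⁻¹ = log ((c - a) / (c - b)) := by
  rw [integral_comp_sub_left (fun x => x⁻¹) c, integral_inv]
  rw [mem_uIcc, not_or]
  constructor <;> intro h <;> linarith [h.1, h.2]

theorem abs_integral_sub_mul_log_le {φ : ℝ → ℝ} {a b c κ M : ℝ}
    (hφ : ContinuousOn φ (Ico a c)) (hM : ∀ s ∈ Ico a c, |φ s - κ / (c - s)| ≤ M)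
    (hab : a ≤ b) (hbc : b < c) :
    |(∫ s in a..b, φ s) - κ * log ((c - a) / (c - b))| ≤ M * (b - a) := by
  have hsub : Icc a b ⊆ Ico a c := Icc_subset_Ico_right hbc
  have hpole : ContinuousOn (fun s => κ / (c - s)) (Icc a b) :=
    continuousOn_const.div (by fun_prop) fun s hs => (sub_pos.2 (hs.2.trans_lt hbc)).ne'
  have hint : IntervalIntegrable φ volume a b :=
    (hφ.mono hsub).intervalIntegrable_of_Icc hab
  have hint' : IntervalIntegrable (fun s => κ / (c - s)) volume a b :=
    hpole.intervalIntegrable_of_Icc hab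
  have hlog : ∫ s in a..b, κ / (c - s) = κ * log ((c - a) / (c - b)) := by
    simp_rw [div_eq_mul_inv κ]
    rw [intervalIntegral.integral_const_mul, integral_inv_const_sub (hab.trans_lt hbc) hbc]
  rw [← hlog, ← integral_sub hint hint']
  have h := norm_integral_le_of_norm_le_const (a := a) (b := b) (C := M)
    (f := fun s => φ s - κ / (c - s)) fun s hs => by
      rw [uIoc_of_le hab] at hs
      exact hM s ⟨hs.1.le, hs.2.trans_lt hbc⟩
  rwa [Real.norm_eq_abs, abs_of_nonneg (sub_nonneg.2 hab)] at h

theorem isBigO_integral_sub_log {φ : ℝ → ℝ} {a c κ M A : ℝ} (hφ : ContinuousOn φ (Ico a c))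
    (hM : ∀ s ∈ Ico a c, |φ s - κ / (c - s)| ≤ M) (hac : a < c) (hA : 0 < A) :
    (fun n : ℕ => (1 / (n : ℝ)) * (∫ s in a..(c - A / √n), φ s)
        - κ * (log n / (2 * n) - log A / n)) =O[atTop] (fun n : ℕ => 1 / (n : ℝ)) := by
  have hsmall : ∀ᶠ n : ℕ in atTop, A / √n < c - a :=
    ((tendsto_const_nhds.div_atTop tendsto_sqrt_atTop).comp
      tendsto_natCast_atTop_atTop).eventually (gt_mem_nhds (sub_pos.2 hac))
  refine IsBigO.of_bound (|M| * (c - a) + |κ * log (c - a)|) ?_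
  filter_upwards [hsmall, eventually_ge_atTop 1] with n hn hn1
  have hn0 : (0 : ℝ) < n := by exact_mod_cast hn1
  have hε : 0 < A / √n := div_pos hA (sqrt_pos.2 hn0)
  have hI := abs_integral_sub_mul_log_le hφ hM (by linarith) (sub_lt_self c hε)
  rw [sub_sub_cancel, log_div (sub_pos.2 hac).ne' hε.ne', log_div hA.ne' (sqrt_pos.2 hn0).ne',
    log_sqrt hn0.le] at hI
  set I := ∫ s in a..(c - A / √n), φ s
  have hR : |I - κ * (log (c - a) - (log A - log n / 2))| ≤ |M| * (c - a) :=
    hI.trans (mul_le_mul (le_abs_self M) (by linarith) (by linarith) (abs_nonneg M))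
  rw [Real.norm_eq_abs, Real.norm_eq_abs, abs_of_pos (one_div_pos.2 hn0),
    show 1 / (n : ℝ) * I - κ * (log n / (2 * n) - log A / n)
      = 1 / n * ((I - κ * (log (c - a) - (log A - log n / 2))) + κ * log (c - a)) by
        field_simp; ring,
    abs_mul, abs_of_pos (one_div_pos.2 hn0), mul_comm]
  gcongr
  exact (abs_add_le _ _).trans (by linarith)

theorem f_over_f'_expansion_general
    (L : ℝ) (hL : 0 < L) (f : ℝ → ℝ)
    (hf : ContDiff ℝ 3 f)
    (hsym : ∀ s, f (L - s) = f s)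
    (hf' : ∀ s ∈ Set.Ico 0 (L / 2), 0 < deriv f s)
    (hsec : deriv (deriv f) (L / 2) < 0) :
    (∃ M, ∀ s ∈ Set.Ico 0 (L / 2),
      |f s / deriv f s - f (L / 2) / (|deriv (deriv f) (L / 2)| * (L / 2 - s))| ≤ M) ∧
    ∀ A : ℝ, 0 < A →
      (fun n : ℕ => (1 / (n : ℝ)) * (∫ s in (0:ℝ)..(L / 2 - A / Real.sqrt n), f s / deriv f s)
          - f (L / 2) / |deriv (deriv f) (L / 2)|
            * (Real.log n / (2 * n) - Real.log A / n))
        =O[atTop] (fun n : ℕ => 1 / (n : ℝ)) := by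
  obtain ⟨M, hM⟩ := exists_bound_div_deriv_sub_div hf hf'
    (deriv_half_eq_zero_of_symmetric hsym) hsec
  refine ⟨⟨M, hM⟩, fun A hA => isBigO_integral_sub_log (M := M) ?_ (fun s hs => ?_) (half_pos hL) hA⟩
  · exact (hf.continuous.continuousOn).div (hf.continuous_deriv (by norm_num)).continuousOn
      fun s hs => (hf' s hs).ne'
  · rw [div_div]
    exact hM s hs

/-- `f/f' - f(L/2)/(|f''(L/2)|(L/2 - s))` is bounded on `[0, L/2)`, and
`(1/n)∫₀^{L/2 - A/√n} f/f' = (f(L/2)/|f''(L/2)|)(ln n/(2n) - ln A/n) + O(1/n)`. -/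
theorem f_over_f'_expansion
    (L : ℝ) (hL : 0 < L) (f : ℝ → ℝ)
    (hf : ContDiff ℝ 3 f)
    (hpos : ∀ s ∈ Set.Ioo 0 L, 0 < f s)
    (hasymp : Asymptotics.IsEquivalent (𝓝[>] (0:ℝ)) f id)
    (hsym : ∀ s, f (L - s) = f s)
    (hf' : ∀ s ∈ Set.Ico 0 (L / 2), 0 < deriv f s)
    (hf'' : ∀ s ∈ Set.Icc 0 L, s ≠ L / 2 → deriv (deriv f) s ≤ 0)
    (hsec : deriv (deriv f) (L / 2) < 0) :
    (∃ M, ∀ s ∈ Set.Ico 0 (L / 2),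
      |f s / deriv f s - f (L / 2) / (|deriv (deriv f) (L / 2)| * (L / 2 - s))| ≤ M) ∧
    ∀ A : ℝ, 0 < A →
      (fun n : ℕ => (1 / (n : ℝ)) * (∫ s in (0:ℝ)..(L / 2 - A / Real.sqrt n), f s / deriv f s)
          - f (L / 2) / |deriv (deriv f) (L / 2)|
            * (Real.log n / (2 * n) - Real.log A / n))
        =O[atTop] (fun n : ℕ => 1 / (n : ℝ)) :=
  f_over_f'_expansion_general L hL f hf hsym hf' hsec
end
end

section
/- For k ≥ 2, let f be C^{2k+1}, symmetric about L/2, f'>0 on [0,L/2), f''≤0, with f(L/2+h) = f(L/2) + (f^{(2k)}(L/2)/(2k)!) h^{2k} + o(h^{2k}) and f^{(2k)}(L/2) < 0. Then Iₙ(L/2) ~ (1/(2k)) Γ(1/(2k)) · ((2k)! f(L/2)/(n |f^{(2k)}(L/2)|))^{1/(2k)} · f^{n−1}(L/2) as n → ∞. -/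
/-!
Put `h u = f (L/2 - u) / f (L/2)`, `p = 2k` and `b = |f^{(2k)}(L/2)| / ((2k)! f (L/2))`, so that
`h u = 1 - b u^p + o(u^p)` as `u → 0⁺` and `h < 1` on `(0, L/2]`. For `0 < c < b < c'` this gives
`exp (-c' u^p) ≤ h u ≤ exp (-c u^p)` on some `[0, δ]`, while `h ≤ q < 1` on `[δ, L/2]`, whose
contribution `O(q^n)` is negligible. The substitution `v = n^{1/p} u` turns
`n^{1/p} ∫₀^δ exp (-n c u^p) du` into `∫₀^{n^{1/p} δ} exp (-c v^p) dv → c^{-1/p} Γ(1/p + 1)`, so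
`n^{1/p} ∫₀^{L/2} h^n` is squeezed between limits that tend to `b^{-1/p} Γ(1/p + 1)` as `c, c' → b`.
-/

open MeasureTheory Filter Set Asymptotics Topology intervalIntegral Real

noncomputable section

theorem tendsto_rpow_mul_integral_exp_neg_mul_rpow {p c δ : ℝ} (hp : 0 < p) (hc : 0 < c)
    (hδ : 0 < δ) :
    Tendsto (fun n : ℕ => (n : ℝ) ^ (1 / p) * ∫ u in (0 : ℝ)..δ, exp (-(n * c) * u ^ p)) atTop
      (𝓝 (c ^ (-1 / p) * Gamma (1 / p + 1))) := by
  rw [← integral_exp_neg_mul_rpow hp hc]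
  have hint : IntegrableOn (fun v : ℝ => exp (-c * v ^ p)) (Ioi 0) := by
    simpa using integrableOn_rpow_mul_exp_neg_mul_rpow neg_one_lt_zero hp hc
  have hscale : Tendsto (fun n : ℕ => (n : ℝ) ^ (1 / p) * δ) atTop atTop :=
    ((tendsto_rpow_atTop (by positivity)).comp tendsto_natCast_atTop_atTop).atTop_mul_const hδ
  have hlim := intervalIntegral_tendsto_integral_Ioi 0 hint hscale
  refine Tendsto.congr (fun n : ℕ => ?_) hlim
  have hsubst := mul_integral_comp_mul_left (a := 0) (b := δ) ((n : ℝ) ^ (1 / p))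
    (f := fun v => exp (-c * v ^ p))
  rw [mul_zero] at hsubst
  rw [← hsubst]
  congr 1
  refine intervalIntegral.integral_congr fun u hu => ?_
  rw [uIcc_of_le hδ.le] at hu
  rw [mul_rpow (by positivity) hu.1, one_div, rpow_inv_rpow n.cast_nonneg hp.ne']
  ring_nf

theorem tendsto_rpow_mul_pow_of_lt_one (s : ℝ) {q : ℝ} (hq₀ : 0 < q) (hq₁ : q < 1) :
    Tendsto (fun n : ℕ => (n : ℝ) ^ s * q ^ n) atTop (𝓝 0) := by
  refine ((tendsto_rpow_mul_exp_neg_mul_atTop_nhds_zero s (-log q)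
    (neg_pos.2 (log_neg hq₀ hq₁))).comp tendsto_natCast_atTop_atTop).congr fun n => ?_
  simp [neg_neg, mul_comm, exp_nat_mul, exp_log hq₀]

theorem eventually_exp_neg_mul_le_one_sub_mul {c d : ℝ} (hd : 0 < d) (hdc : d < c) :
    ∀ᶠ x in 𝓝 (0 : ℝ), 0 ≤ x → exp (-c * x) ≤ 1 - d * x := by
  have hc : 0 < c := hd.trans hdc
  filter_upwards [eventually_lt_nhds (div_pos (sub_pos.2 hdc) (mul_pos hc hd))] with x hx hx₀
  rw [lt_div_iff₀ (mul_pos hc hd)] at hx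
  -- `(1 - d x) (1 + c x) = 1 + x (c - d - c d x) ≥ 1`
  calc exp (-c * x) ≤ (1 + c * x)⁻¹ := by
        rw [neg_mul, exp_neg]
        exact inv_anti₀ (by positivity) (by linarith [add_one_le_exp (c * x)])
    _ ≤ 1 - d * x := by
        rw [inv_le_iff_one_le_mul₀' (by positivity)]
        nlinarith [mul_nonneg hx₀ (sub_nonneg.2 hx.le)]

section LocalBounds

variable {h : ℝ → ℝ} {b c p : ℝ}

theorem eventually_le_exp_neg_mul_rpow
    (hexp : (fun u => h u - (1 - b * u ^ p)) =o[𝓝[≥] 0] fun u => u ^ p) (hcb : c < b) :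
    ∀ᶠ u in 𝓝[≥] 0, h u ≤ exp (-c * u ^ p) := by
  filter_upwards [hexp.bound (sub_pos.2 hcb), self_mem_nhdsWithin] with u hu (hu₀ : 0 ≤ u)
  rw [norm_eq_abs, norm_eq_abs, abs_of_nonneg (rpow_nonneg hu₀ p)] at hu
  linarith [le_abs_self (h u - (1 - b * u ^ p)), add_one_le_exp (-c * u ^ p)]

theorem eventually_exp_neg_mul_rpow_le (hp : 0 < p) (hb : 0 < b)
    (hexp : (fun u => h u - (1 - b * u ^ p)) =o[𝓝[≥] 0] fun u => u ^ p) (hbc : b < c) :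
    ∀ᶠ u in 𝓝[≥] 0, exp (-c * u ^ p) ≤ h u := by
  have hd : b < (b + c) / 2 := by linarith
  have hpow : Tendsto (fun u : ℝ => u ^ p) (𝓝[≥] 0) (𝓝 0) := by
    simpa [zero_rpow hp.ne'] using
      ((continuous_rpow_const hp.le).tendsto 0).mono_left nhdsWithin_le_nhds
  filter_upwards [hexp.bound (sub_pos.2 hd), self_mem_nhdsWithin,
    hpow.eventually (eventually_exp_neg_mul_le_one_sub_mul (c := c) (hb.trans hd) (by linarith))]
    with u hu (hu₀ : 0 ≤ u) hexpu
  have hup : 0 ≤ u ^ p := rpow_nonneg hu₀ p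
  rw [norm_eq_abs, norm_eq_abs, abs_of_nonneg hup] at hu
  linarith [neg_abs_le (h u - (1 - b * u ^ p)), hexpu hup]

end LocalBounds

section Laplace

variable {h : ℝ → ℝ} {a b c p δ q : ℝ}

theorem integral_pow_eq_add (hδ : 0 ≤ δ) (hδa : δ ≤ a) (hcont : ContinuousOn h (Icc 0 a))
    (n : ℕ) :
    ∫ u in (0 : ℝ)..a, h u ^ n = (∫ u in (0 : ℝ)..δ, h u ^ n) + ∫ u in δ..a, h u ^ n :=
  (integral_add_adjacent_intervals
    (((hcont.pow n).mono (Icc_subset_Icc_right hδa)).intervalIntegrable_of_Icc hδ)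
    (((hcont.pow n).mono (Icc_subset_Icc_left hδ)).intervalIntegrable_of_Icc hδa)).symm

theorem integral_pow_le_of_le_exp (hp : 0 ≤ p) (hδ : 0 ≤ δ) (hδa : δ ≤ a)
    (hcont : ContinuousOn h (Icc 0 a)) (hnonneg : ∀ u ∈ Icc 0 a, 0 ≤ h u)
    (hnear : ∀ u ∈ Icc 0 δ, h u ≤ exp (-c * u ^ p)) (hfar : ∀ u ∈ Icc δ a, h u ≤ q) (n : ℕ) :
    ∫ u in (0 : ℝ)..a, h u ^ n ≤ (∫ u in (0 : ℝ)..δ, exp (-(n * c) * u ^ p)) + a * q ^ n := by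
  have hq : 0 ≤ q := (hnonneg δ ⟨hδ, hδa⟩).trans (hfar δ ⟨le_rfl, hδa⟩)
  rw [integral_pow_eq_add hδ hδa hcont]
  gcongr ?_ + ?_
  · refine integral_mono_on hδ
      (((hcont.pow n).mono (Icc_subset_Icc_right hδa)).intervalIntegrable_of_Icc hδ)
      ((continuous_exp.comp (continuous_const.mul (continuous_rpow_const hp))).intervalIntegrable
        _ _) fun u hu => ?_
    rw [show -(n * c) * u ^ p = n * (-c * u ^ p) by ring, exp_nat_mul]
    exact pow_le_pow_left₀ (hnonneg u ⟨hu.1, hu.2.trans hδa⟩) (hnear u hu) n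
  · calc ∫ u in δ..a, h u ^ n ≤ ∫ _ in δ..a, q ^ n :=
          integral_mono_on hδa
            (((hcont.pow n).mono (Icc_subset_Icc_left hδ)).intervalIntegrable_of_Icc hδa)
            intervalIntegrable_const
            fun u hu => pow_le_pow_left₀ (hnonneg u ⟨hδ.trans hu.1, hu.2⟩) (hfar u hu) n
      _ ≤ a * q ^ n := by
          rw [intervalIntegral.integral_const, smul_eq_mul]
          exact mul_le_mul_of_nonneg_right (by linarith) (pow_nonneg hq n)

theorem integral_exp_le_integral_pow (hp : 0 ≤ p) (hδ : 0 ≤ δ) (hδa : δ ≤ a)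
    (hcont : ContinuousOn h (Icc 0 a)) (hnonneg : ∀ u ∈ Icc 0 a, 0 ≤ h u)
    (hnear : ∀ u ∈ Icc 0 δ, exp (-c * u ^ p) ≤ h u) (n : ℕ) :
    ∫ u in (0 : ℝ)..δ, exp (-(n * c) * u ^ p) ≤ ∫ u in (0 : ℝ)..a, h u ^ n := by
  rw [integral_pow_eq_add hδ hδa hcont]
  refine le_add_of_le_of_nonneg ?_ (integral_nonneg hδa fun u hu =>
    pow_nonneg (hnonneg u ⟨hδ.trans hu.1, hu.2⟩) n)
  refine integral_mono_on hδ
    ((continuous_exp.comp (continuous_const.mul (continuous_rpow_const hp))).intervalIntegrable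
      _ _)
    (((hcont.pow n).mono (Icc_subset_Icc_right hδa)).intervalIntegrable_of_Icc hδ)
    fun u hu => ?_
  rw [show -(n * c) * u ^ p = n * (-c * u ^ p) by ring, exp_nat_mul]
  exact pow_le_pow_left₀ (exp_nonneg _) (hnear u hu) n

theorem eventually_rpow_mul_integral_pow_lt (ha : 0 < a) (hb : 0 < b) (hp : 0 < p)
    (hcont : ContinuousOn h (Icc 0 a)) (hnonneg : ∀ u ∈ Icc 0 a, 0 ≤ h u)
    (hlt : ∀ u ∈ Ioc 0 a, h u < 1)
    (hexp : (fun u => h u - (1 - b * u ^ p)) =o[𝓝[≥] 0] fun u => u ^ p) {x : ℝ}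
    (hx : b ^ (-1 / p) * Gamma (1 / p + 1) < x) :
    ∀ᶠ n : ℕ in atTop, (n : ℝ) ^ (1 / p) * ∫ u in (0 : ℝ)..a, h u ^ n < x := by
  obtain ⟨c, hcx, hc₀, hcb⟩ : ∃ c, c ^ (-1 / p) * Gamma (1 / p + 1) < x ∧ 0 < c ∧ c < b :=
    ((((continuousAt_id.rpow_const (Or.inl hb.ne')).mul_const _).eventually
      (gt_mem_nhds hx)).filter_mono nhdsWithin_le_nhds |>.and (Ioo_mem_nhdsLT hb)).exists
  obtain ⟨δ₀, hδ₀, hnear⟩ :=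
    mem_nhdsGE_iff_exists_Icc_subset.1 (eventually_le_exp_neg_mul_rpow hexp hcb)
  set δ := min δ₀ a
  have hδ : 0 < δ := lt_min hδ₀ ha
  obtain ⟨u₀, hu₀, hmax⟩ := isCompact_Icc.exists_isMaxOn (nonempty_Icc.2 (min_le_right δ₀ a))
    (hcont.mono (Icc_subset_Icc_left hδ.le))
  set q := max (h u₀) 2⁻¹
  have hq₀ : 0 < q := lt_max_of_lt_right (by norm_num)
  have hq₁ : q < 1 := max_lt (hlt u₀ ⟨hδ.trans_le hu₀.1, hu₀.2⟩) (by norm_num)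
  have hlim : Tendsto (fun n : ℕ => (n : ℝ) ^ (1 / p) *
      ((∫ u in (0 : ℝ)..δ, exp (-(n * c) * u ^ p)) + a * q ^ n)) atTop
      (𝓝 (c ^ (-1 / p) * Gamma (1 / p + 1) + a * 0)) := by
    refine ((tendsto_rpow_mul_integral_exp_neg_mul_rpow hp hc₀ hδ).add
      ((tendsto_rpow_mul_pow_of_lt_one (1 / p) hq₀ hq₁).const_mul a)).congr fun n => ?_
    ring
  filter_upwards [hlim.eventually_lt_const (by rwa [mul_zero, add_zero])] with n hn
  refine lt_of_le_of_lt (mul_le_mul_of_nonneg_left ?_ (by positivity)) hn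
  exact integral_pow_le_of_le_exp hp.le hδ.le (min_le_right _ _) hcont hnonneg
    (fun u hu => hnear ⟨hu.1, hu.2.trans (min_le_left _ _)⟩)
    (fun u hu => (hmax hu).trans (le_max_left _ _)) n

theorem eventually_lt_rpow_mul_integral_pow (ha : 0 < a) (hb : 0 < b) (hp : 0 < p)
    (hcont : ContinuousOn h (Icc 0 a)) (hnonneg : ∀ u ∈ Icc 0 a, 0 ≤ h u)
    (hexp : (fun u => h u - (1 - b * u ^ p)) =o[𝓝[≥] 0] fun u => u ^ p) {x : ℝ}
    (hx : x < b ^ (-1 / p) * Gamma (1 / p + 1)) :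
    ∀ᶠ n : ℕ in atTop, x < (n : ℝ) ^ (1 / p) * ∫ u in (0 : ℝ)..a, h u ^ n := by
  obtain ⟨c, hcx, hbc⟩ : ∃ c, x < c ^ (-1 / p) * Gamma (1 / p + 1) ∧ b < c :=
    ((((continuousAt_id.rpow_const (Or.inl hb.ne')).mul_const _).eventually
      (lt_mem_nhds hx)).filter_mono nhdsWithin_le_nhds |>.and
      (self_mem_nhdsWithin : Ioi b ∈ 𝓝[>] b)).exists
  obtain ⟨δ₀, hδ₀, hnear⟩ :=
    mem_nhdsGE_iff_exists_Icc_subset.1 (eventually_exp_neg_mul_rpow_le hp hb hexp hbc)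
  set δ := min δ₀ a
  have hδ : 0 < δ := lt_min hδ₀ ha
  have hlim := tendsto_rpow_mul_integral_exp_neg_mul_rpow hp (hb.trans hbc) hδ
  filter_upwards [hlim.eventually_const_lt hcx] with n hn
  refine hn.trans_le (mul_le_mul_of_nonneg_left ?_ (by positivity))
  exact integral_exp_le_integral_pow hp.le hδ.le (min_le_right _ _) hcont hnonneg
    (fun u hu => hnear ⟨hu.1, hu.2.trans (min_le_left _ _)⟩) n

theorem tendsto_rpow_mul_integral_pow (ha : 0 < a) (hb : 0 < b) (hp : 0 < p)
    (hcont : ContinuousOn h (Icc 0 a)) (hnonneg : ∀ u ∈ Icc 0 a, 0 ≤ h u)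
    (hlt : ∀ u ∈ Ioc 0 a, h u < 1)
    (hexp : (fun u => h u - (1 - b * u ^ p)) =o[𝓝[≥] 0] fun u => u ^ p) :
    Tendsto (fun n : ℕ => (n : ℝ) ^ (1 / p) * ∫ u in (0 : ℝ)..a, h u ^ n) atTop
      (𝓝 (b ^ (-1 / p) * Gamma (1 / p + 1))) :=
  tendsto_order.2
    ⟨fun _ hx => eventually_lt_rpow_mul_integral_pow ha hb hp hcont hnonneg hexp hx,
    fun _ hx => eventually_rpow_mul_integral_pow_lt ha hb hp hcont hnonneg hlt hexp hx⟩

end Laplace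

theorem isEquivalent_natCast_sub_one :
    (fun n : ℕ => ((n - 1 : ℕ) : ℝ)) ~[atTop] fun n => (n : ℝ) := by
  refine (IsEquivalent.refl.add_const_of_norm_tendsto_atTop (c := (-1 : ℝ))
    (tendsto_norm_atTop_atTop.comp tendsto_natCast_atTop_atTop)).congr_left ?_
  filter_upwards [eventually_ge_atTop 1] with n hn
  push_cast [Nat.cast_sub hn]
  ring

theorem isEquivalent_sub_one_of_tendsto_rpow_mul {I : ℕ → ℝ} {s ℓ : ℝ} (hℓ : ℓ ≠ 0)
    (hI : Tendsto (fun n : ℕ => (n : ℝ) ^ s * I n) atTop (𝓝 ℓ)) :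
    (fun n => I (n - 1)) ~[atTop] fun n => ℓ * (n : ℝ) ^ (-s) := by
  have hscaled : I ~[atTop] fun n => ℓ * (n : ℝ) ^ (-s) := by
    refine (((isEquivalent_const_iff_tendsto hℓ).2 hI).mul
      (IsEquivalent.refl (u := fun n : ℕ => (n : ℝ) ^ (-s)))).congr_left ?_
    filter_upwards [eventually_ge_atTop 1] with n hn
    have : (0 : ℝ) < n := by exact_mod_cast hn
    simp [rpow_neg this.le, mul_comm, (rpow_pos_of_pos this s).ne']
  exact (hscaled.comp_tendsto (tendsto_sub_atTop_nat 1)).trans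
    (IsEquivalent.refl.mul (isEquivalent_natCast_sub_one.rpow fun n => n.cast_nonneg))

theorem isLittleO_div_sub_one_sub_mul_rpow_of_even {f : ℝ → ℝ} {x₀ c : ℝ} {m : ℕ}
    (hm : Even m) (hf : f x₀ ≠ 0)
    (hexp : (fun h => f (x₀ + h) - f x₀ - c * h ^ m) =o[𝓝 0] fun h => h ^ m) :
    (fun u => f (x₀ - u) / f x₀ - (1 - (-c / f x₀) * u ^ (m : ℝ))) =o[𝓝[≥] 0]
      fun u => u ^ (m : ℝ) := by
  have hneg : Tendsto (fun u : ℝ => -u) (𝓝[≥] 0) (𝓝 0) :=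
    (continuous_neg.tendsto' 0 0 neg_zero).mono_left nhdsWithin_le_nhds
  refine ((hexp.comp_tendsto hneg).const_mul_left (f x₀)⁻¹).congr (fun u => ?_) fun u => ?_
  · simp only [Function.comp_apply, rpow_natCast, hm.neg_pow, ← sub_eq_add_neg]
    field_simp
    ring
  · simp [rpow_natCast, hm.neg_pow]

theorem nonneg_of_pos_on_Ioo {f : ℝ → ℝ} {a b : ℝ} (hab : a < b) (hf : Continuous f)
    (hpos : ∀ x ∈ Ioo a b, 0 < f x) : ∀ x ∈ Icc a b, 0 ≤ f x := by
  rw [← closure_Ioo hab.ne]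
  exact closure_minimal (fun x hx => (hpos x hx).le) (isClosed_le continuous_const hf)

theorem integral_pow_eq_integral_reflect_div_pow_mul {f : ℝ → ℝ} {a M : ℝ} (hM : M ≠ 0)
    (n : ℕ) :
    ∫ t in (0 : ℝ)..a, f t ^ n = (∫ u in (0 : ℝ)..a, (f (a - u) / M) ^ n) * M ^ n := by
  rw [← intervalIntegral.integral_mul_const]
  simp_rw [div_pow, div_mul_cancel₀ _ (pow_ne_zero n hM)]
  rw [intervalIntegral.integral_comp_sub_left (fun t => f t ^ n), sub_self, sub_zero]

theorem isEquivalent_integral_pow_sub_one {f : ℝ → ℝ} {x₀ b p : ℝ} (hx₀ : 0 < x₀) (hb : 0 < b)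
    (hp : 0 < p) (hf : Continuous f) (hlt : ∀ x ∈ Ico 0 x₀, f x < f x₀)
    (hnonneg : ∀ x ∈ Icc 0 x₀, 0 ≤ f x) (hM : 0 < f x₀)
    (hexp : (fun u => f (x₀ - u) / f x₀ - (1 - b * u ^ p)) =o[𝓝[≥] 0] fun u => u ^ p) :
    (fun n : ℕ => ∫ t in (0 : ℝ)..x₀, f t ^ (n - 1)) ~[atTop]
      fun n => b ^ (-1 / p) * Gamma (1 / p + 1) * (n : ℝ) ^ (-(1 / p)) * f x₀ ^ (n - 1) := by
  have hlim := tendsto_rpow_mul_integral_pow (h := fun u => f (x₀ - u) / f x₀) hx₀ hb hp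
    ((hf.comp (continuous_sub_left _)).div_const _).continuousOn
    (fun u hu => div_nonneg (hnonneg _ ⟨by linarith [hu.2], by linarith [hu.1]⟩) hM.le)
    (fun u hu => (div_lt_one hM).2 (hlt _ ⟨by linarith [hu.2], by linarith [hu.1]⟩))
    hexp
  refine ((isEquivalent_sub_one_of_tendsto_rpow_mul
    (mul_pos (rpow_pos_of_pos hb _) (Gamma_pos_of_pos (by positivity))).ne' hlim).mul
    (IsEquivalent.refl (u := fun n : ℕ => f x₀ ^ (n - 1)))).congr_left ?_
  exact .of_forall fun n => (integral_pow_eq_integral_reflect_div_pow_mul hM.ne' _).symm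

theorem laplace_asymptotic_degenerate_general
    (L : ℝ) (hL : 0 < L) (k : ℕ) (hk : 2 ≤ k) (f : ℝ → ℝ)
    (hf : ContDiff ℝ (2 * k + 1 : ℕ) f)
    (hpos : ∀ s ∈ Set.Ioo 0 L, 0 < f s)
    (hf' : ∀ s ∈ Set.Ico 0 (L / 2), 0 < deriv f s)
    (hexp : (fun h : ℝ => f (L / 2 + h) - f (L / 2)
        - iteratedDeriv (2 * k) f (L / 2) / ((2 * k).factorial : ℝ) * h ^ (2 * k))
      =o[𝓝 (0:ℝ)] (fun h : ℝ => h ^ (2 * k)))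
    (hneg : iteratedDeriv (2 * k) f (L / 2) < 0) :
    Asymptotics.IsEquivalent atTop
      (fun n : ℕ => ∫ t in (0:ℝ)..(L / 2), f t ^ (n - 1))
      (fun n : ℕ => (1 / (2 * k : ℝ)) * Real.Gamma (1 / (2 * k : ℝ))
        * (((2 * k).factorial : ℝ) * f (L / 2)
            / ((n : ℝ) * |iteratedDeriv (2 * k) f (L / 2)|)) ^ ((1 : ℝ) / (2 * k : ℝ))
        * f (L / 2) ^ (n - 1)) := by
  have hM : 0 < f (L / 2) := hpos _ ⟨by linarith, by linarith⟩
  have hexp' := isLittleO_div_sub_one_sub_mul_rpow_of_even (even_two_mul k) hM.ne' hexp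
  set A := iteratedDeriv (2 * k) f (L / 2)
  set F : ℝ := ((2 * k).factorial : ℝ)
  set M := f (L / 2)
  have hp : 0 < (2 * k : ℝ) := by norm_cast; omega
  have hb : -(A / F) / M = |A| / (F * M) := by rw [abs_of_neg hneg]; field_simp
  have hb₀ : 0 < |A| / (F * M) := div_pos (abs_pos.2 hneg.ne) (by positivity)
  rw [hb] at hexp'
  push_cast at hexp'
  have hmono : StrictMonoOn f (Icc 0 (L / 2)) :=
    strictMonoOn_of_deriv_pos (convex_Icc 0 (L / 2)) hf.continuous.continuousOn
      fun x hx => hf' x (Ioo_subset_Ico_self (by rwa [interior_Icc] at hx))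
  have hnonneg : ∀ x ∈ Icc 0 (L / 2), 0 ≤ f x := fun x hx =>
    nonneg_of_pos_on_Ioo hL hf.continuous hpos x ⟨hx.1, by linarith [hx.2]⟩
  refine (isEquivalent_integral_pow_sub_one (by positivity) hb₀ hp hf.continuous
    (fun x hx => hmono ⟨hx.1, hx.2.le⟩ ⟨by positivity, le_rfl⟩ hx.2) hnonneg hM
    hexp').congr_right ?_
  filter_upwards [eventually_gt_atTop 0] with n hn
  have hinv : F * M / (n * |A|) = (|A| / (F * M) * n)⁻¹ := by field_simp
  rw [Gamma_add_one (by positivity), neg_div, hinv, inv_rpow (by positivity),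
    ← rpow_neg (by positivity), mul_rpow hb₀.le n.cast_nonneg]
  ring

/-- Laplace asymptotics with a degenerate maximum of order `2k`:
`Iₙ(L/2) ~ (1/(2k)) Γ(1/(2k)) ((2k)! f(L/2)/(n |f^{(2k)}(L/2)|))^{1/(2k)} f^{n-1}(L/2)`. -/
theorem laplace_asymptotic_degenerate
    (L : ℝ) (hL : 0 < L) (k : ℕ) (hk : 2 ≤ k) (f : ℝ → ℝ)
    (hf : ContDiff ℝ (2 * k + 1 : ℕ) f)
    (hpos : ∀ s ∈ Set.Ioo 0 L, 0 < f s)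
    (hasymp : Asymptotics.IsEquivalent (𝓝[>] (0:ℝ)) f id)
    (hsym : ∀ s, f (L - s) = f s)
    (hf' : ∀ s ∈ Set.Ico 0 (L / 2), 0 < deriv f s)
    (hf'' : ∀ s ∈ Set.Icc 0 L, s ≠ L / 2 → deriv (deriv f) s ≤ 0)
    (hexp : (fun h : ℝ => f (L / 2 + h) - f (L / 2)
        - iteratedDeriv (2 * k) f (L / 2) / ((2 * k).factorial : ℝ) * h ^ (2 * k))
      =o[𝓝 (0:ℝ)] (fun h : ℝ => h ^ (2 * k)))
    (hneg : iteratedDeriv (2 * k) f (L / 2) < 0) :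
    Asymptotics.IsEquivalent atTop
      (fun n : ℕ => ∫ t in (0:ℝ)..(L / 2), f t ^ (n - 1))
      (fun n : ℕ => (1 / (2 * k : ℝ)) * Real.Gamma (1 / (2 * k : ℝ))
        * (((2 * k).factorial : ℝ) * f (L / 2)
            / ((n : ℝ) * |iteratedDeriv (2 * k) f (L / 2)|)) ^ ((1 : ℝ) / (2 * k : ℝ))
        * f (L / 2) ^ (n - 1)) :=
  laplace_asymptotic_degenerate_general L hL k hk f hf hpos hf' hexp hneg
end
end
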